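/- The map S × Fin 2 → S × Fin 2 given by (z,0) ↦ (z,0) and (z,1) ↦ (−z,1) (where −∞ = ∞) descends to a well-defined homeomorphism f : X₁ → X₂ which satisfies f ∘ σ₁ = σ₂ ∘ f. -/

import Mathlib

open OnePoint

/-- Complex conjugation extended to the Riemann sphere `OnePoint ℂ`, fixing `∞`. -/
noncomputable def conjSphere : OnePoint ℂ → OnePoint ℂ := OnePoint.map (starRingEnd ℂ)

/-- The map `z ↦ -z` extended to the Riemann sphere `OnePoint ℂ`, sending `∞` to `∞`. -/
def negSphere : OnePoint ℂ → OnePoint ℂ := OnePoint.map (fun z : ℂ => -z)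

/-- Identifications `(0,0)∼(0,1)`, `(i,0)∼(i,1)`, `(−i,0)∼(−i,1)` on `S × Fin 2`. -/
def relEx1₁ : OnePoint ℂ × Fin 2 → OnePoint ℂ × Fin 2 → Prop := fun a b =>
  (a = (((0 : ℂ) : OnePoint ℂ), 0) ∧ b = (((0 : ℂ) : OnePoint ℂ), 1)) ∨
  (a = ((Complex.I : OnePoint ℂ), 0) ∧ b = ((Complex.I : OnePoint ℂ), 1)) ∨
  (a = (((-Complex.I : ℂ) : OnePoint ℂ), 0) ∧ b = (((-Complex.I : ℂ) : OnePoint ℂ), 1))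

/-- Identifications `(0,0)∼(0,1)`, `(i,0)∼(−i,1)`, `(−i,0)∼(i,1)` on `S × Fin 2`. -/
def relEx1₂ : OnePoint ℂ × Fin 2 → OnePoint ℂ × Fin 2 → Prop := fun a b =>
  (a = (((0 : ℂ) : OnePoint ℂ), 0) ∧ b = (((0 : ℂ) : OnePoint ℂ), 1)) ∨
  (a = ((Complex.I : OnePoint ℂ), 0) ∧ b = (((-Complex.I : ℂ) : OnePoint ℂ), 1)) ∨
  (a = (((-Complex.I : ℂ) : OnePoint ℂ), 0) ∧ b = ((Complex.I : OnePoint ℂ), 1))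

/-- The map `(z,0) ↦ (z,0)`, `(z,1) ↦ (−z,1)` on `S × Fin 2` (with `−∞ = ∞`). -/
def flipSecondSphere : OnePoint ℂ × Fin 2 → OnePoint ℂ × Fin 2 :=
  fun a => (if a.2 = 1 then negSphere a.1 else a.1, a.2)

/-!
Both quotients glue two copies of the sphere at three points; `flipSecondSphere` is an
involutive homeomorphism of `S × Fin 2` carrying the gluing pairs of `X₁` exactly onto those
of `X₂` (since `-0 = 0` and `-i`, `i` are swapped), so it descends to a homeomorphism of the
quotients. Conjugation preserves each gluing relation (it swaps `i` and `-i` on both sheets)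
and commutes with `z ↦ -z`, which gives the equivariance.
-/

def Function.Involutive.toHomeomorph {X : Type*} [TopologicalSpace X] {f : X → X}
    (hf : Function.Involutive f) (hc : Continuous f) : X ≃ₜ X where
  toEquiv := hf.toPerm f
  continuous_toFun := hc
  continuous_invFun := hc

theorem continuous_conjSphere : Continuous conjSphere :=
  (Homeomorph.onePointCongr Complex.conjCLE.toHomeomorph).continuous

theorem continuous_negSphere : Continuous negSphere :=
  (Homeomorph.onePointCongr (Homeomorph.neg ℂ)).continuous

theorem negSphere_involutive : Function.Involutive negSphere := by
  rintro (_ | z)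
  · rfl
  · exact congrArg ((↑) : ℂ → OnePoint ℂ) (neg_neg z)

theorem negSphere_conjSphere (z : OnePoint ℂ) :
    negSphere (conjSphere z) = conjSphere (negSphere z) := by
  cases z with
  | infty => rfl
  | coe w => exact congrArg ((↑) : ℂ → OnePoint ℂ) (map_neg (starRingEnd ℂ) w).symm

theorem flipSecondSphere_involutive : Function.Involutive flipSecondSphere := by
  rintro ⟨z, k⟩
  by_cases hk : k = 1 <;> simp [flipSecondSphere, hk, negSphere_involutive z]

theorem continuous_flipSecondSphere : Continuous flipSecondSphere := by
  refine continuous_prod_of_discrete_right.2 fun k => ?_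
  by_cases hk : k = 1
  · simpa [flipSecondSphere, hk] using continuous_negSphere.prodMk continuous_const
  · simpa [flipSecondSphere, hk] using continuous_id.prodMk continuous_const

theorem flipSecondSphere_conjSphere (a : OnePoint ℂ × Fin 2) :
    flipSecondSphere (Prod.map conjSphere id a) = Prod.map conjSphere id (flipSecondSphere a) := by
  by_cases h : a.2 = 1 <;> simp [flipSecondSphere, Prod.map, h, negSphere_conjSphere]

theorem relEx1₁_conjSphere {a b : OnePoint ℂ × Fin 2} (h : relEx1₁ a b) :
    relEx1₁ (Prod.map conjSphere id a) (Prod.map conjSphere id b) := by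
  rcases h with ⟨rfl, rfl⟩ | ⟨rfl, rfl⟩ | ⟨rfl, rfl⟩ <;> simp [relEx1₁, conjSphere]

theorem relEx1₂_conjSphere {a b : OnePoint ℂ × Fin 2} (h : relEx1₂ a b) :
    relEx1₂ (Prod.map conjSphere id a) (Prod.map conjSphere id b) := by
  rcases h with ⟨rfl, rfl⟩ | ⟨rfl, rfl⟩ | ⟨rfl, rfl⟩ <;> simp [relEx1₂, conjSphere]

theorem relEx1₁_iff_relEx1₂_flipSecondSphere (a b : OnePoint ℂ × Fin 2) :
    relEx1₁ a b ↔ relEx1₂ (flipSecondSphere a) (flipSecondSphere b) := by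
  simp only [relEx1₂, flipSecondSphere_involutive.eq_iff]
  simp [flipSecondSphere, negSphere, relEx1₁]

/-- conjugation descends to continuous involutions `σ₁`, `σ₂` on the two
complex doubles `X₁ = Quot relEx1₁`, `X₂ = Quot relEx1₂`, and the map
`(z,0) ↦ (z,0)`, `(z,1) ↦ (−z,1)` descends to a homeomorphism `f : X₁ ≃ₜ X₂` with
`f ∘ σ₁ = σ₂ ∘ f`. -/
theorem double_cover_statement_6 :
    ∃ (σ₁ : Quot relEx1₁ → Quot relEx1₁) (σ₂ : Quot relEx1₂ → Quot relEx1₂),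
      Continuous σ₁ ∧ Continuous σ₂ ∧
      (∀ a : OnePoint ℂ × Fin 2,
        σ₁ (Quot.mk relEx1₁ a) = Quot.mk relEx1₁ (conjSphere a.1, a.2)) ∧
      (∀ a : OnePoint ℂ × Fin 2,
        σ₂ (Quot.mk relEx1₂ a) = Quot.mk relEx1₂ (conjSphere a.1, a.2)) ∧
      ∃ f : Quot relEx1₁ ≃ₜ Quot relEx1₂,
        (∀ a : OnePoint ℂ × Fin 2,
          f (Quot.mk relEx1₁ a) = Quot.mk relEx1₂ (flipSecondSphere a)) ∧
        ∀ x : Quot relEx1₁, f (σ₁ x) = σ₂ (f x) := by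
  refine ⟨Quot.map (Prod.map conjSphere id) fun _ _ => relEx1₁_conjSphere,
    Quot.map (Prod.map conjSphere id) fun _ _ => relEx1₂_conjSphere,
    continuous_quot_map _ (continuous_conjSphere.prodMap continuous_id),
    continuous_quot_map _ (continuous_conjSphere.prodMap continuous_id),
    fun _ => rfl, fun _ => rfl,
    Homeomorph.Quot.congr
      (flipSecondSphere_involutive.toHomeomorph continuous_flipSecondSphere)
      relEx1₁_iff_relEx1₂_flipSecondSphere,
    fun _ => rfl, ?_⟩
  rintro ⟨a⟩
  exact congrArg (Quot.mk relEx1₂) (flipSecondSphere_conjSphere a)
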